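/- arXiv:math/0601203 — 3 statements merged into one kernel-verified Lean document; each statement's English description precedes it below -/
import Mathlib

section
/- For every integer d ≥ 0, the formal power series P_d(q) is the power series expansion at q = 0 of a rational function R_d ∈ ℚ(q), and this rational function is invariant under the substitution q ↦ 1/q, i.e. R_d(1/q) = R_d(q); concretely, there exist polynomials a, b ∈ ℚ[q] with b(0) ≠ 0 such that b(q)·P_d(q) = a(q) in ℚ⟦q⟧ and a(q)·q^{deg b}·b(1/q) = b(q)·q^{deg a}·a(1/q)·q^{deg b − deg a} as an equality of the rational functions a/b under q ↦ 1/q. -/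
open PowerSeries Finset

noncomputable section

/-- Convergence (in the formal, i.e. coefficientwise in both variables, topology of
`R⟦q⟧⟦v⟧`) of the infinite product of the family `f` to `F`. -/
def HasPSProd₂ {ι : Type} {R : Type} [CommRing R] (f : ι → PowerSeries (PowerSeries R))
    (F : PowerSeries (PowerSeries R)) : Prop :=
  ∀ d a : ℕ, ∃ s₀ : Finset ι, ∀ s : Finset ι, s₀ ⊆ s →
    (PowerSeries.coeff (R := R) a) ((PowerSeries.coeff (R := PowerSeries R) d) (∏ i ∈ s, f i)) =
      (PowerSeries.coeff (R := R) a) ((PowerSeries.coeff (R := PowerSeries R) d) F)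
/-- `P` is the family of power series `P_d(q) ∈ ℤ⟦q⟧` defined by
`∏_{m=1}^∞ (1 + q^m v)^m = ∑_{d=0}^∞ P_d(q) v^d` in `ℤ⟦q⟧⟦v⟧`; the outer power series
variable is `v` and the variable of the coefficient ring `ℤ⟦q⟧` is `q`. -/
def IsPdFamily (P : ℕ → PowerSeries ℤ) : Prop :=
  HasPSProd₂
    (fun m : ℕ =>
      (1 + PowerSeries.C (R := PowerSeries ℤ) ((PowerSeries.X : PowerSeries ℤ) ^ (m + 1)) *
        PowerSeries.X) ^ (m + 1))
    (PowerSeries.mk P)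

/-!
Write `∏_{m ≥ 1} (1 + q^m v)^m = ∏_j (1 + x_j v)` with roots `x_j = q^m` repeated `m` times.
Newton's identities express `d P_d` through `P_0, …, P_{d-1}` and the power sums
`p_k = ∑_{m ≥ 1} m q^{mk} = q^k / (1 - q^k)^2`, so `P_d` is a polynomial with rational
coefficients in the `p_k`. Each `p_k` is invariant under `q ↦ 1/q`, and the expansions of
invariant rational functions form a subalgebra of `ℚ⟦q⟧`. Newton's identities are applied to the
finite products over `m < N` and passed to the limit `N → ∞` coefficientwise.
-/

open scoped Polynomial PowerSeries.WithPiTopology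
open Filter Topology

namespace PowerSeries

theorem tendsto_of_X_pow_dvd_sub {R : Type*} [Ring R] [TopologicalSpace R]
    {f : ℕ → R⟦X⟧} {g : R⟦X⟧} (h : ∀ N, X ^ N ∣ f N - g) : Tendsto f atTop (𝓝 g) := by
  rw [WithPiTopology.tendsto_iff_coeff_tendsto]
  intro n
  refine tendsto_const_nhds.congr' ?_
  filter_upwards [eventually_gt_atTop n] with N hN
  have := X_pow_dvd_iff.1 (h N) n hN
  rwa [map_sub, sub_eq_zero, eq_comm] at this

variable {A σ : Type*} [CommRing A] [Fintype σ]

theorem coeff_prod_one_add_C_mul_X (c : σ → A) (k : ℕ) :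
    coeff k (∏ i, (1 + C (c i) * X)) = MvPolynomial.aeval c (MvPolynomial.esymm σ A k) := by
  classical
  simp only [prod_one_add, prod_mul_distrib, prod_const, ← map_prod, map_sum, coeff_C_mul_X_pow]
  rw [MvPolynomial.esymm, powersetCard_eq_filter, sum_filter]
  simp [eq_comm (a := k), apply_ite (MvPolynomial.aeval c)]

theorem natCast_mul_coeff_prod_one_add_C_mul_X (c : σ → A) (k : ℕ) :
    k * coeff k (∏ i, (1 + C (c i) * X)) = (-1) ^ (k + 1) *
      ∑ a ∈ antidiagonal k with a.1 < k,
        (-1) ^ a.1 * coeff a.1 (∏ i, (1 + C (c i) * X)) * ∑ i, c i ^ a.2 := by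
  classical
  simpa [coeff_prod_one_add_C_mul_X, MvPolynomial.psum] using
    congrArg (MvPolynomial.aeval c) (MvPolynomial.mul_esymm_eq_sum σ A k)

end PowerSeries

theorem Polynomial.mul_reverse_eq_of_mul_X_pow_eq {R : Type*} [CommRing R] [IsDomain R]
    {a b : R[X]} (ha : a ≠ 0) (hb0 : b.coeff 0 ≠ 0)
    (h : a * b.reverse * X ^ a.natDegree = b * a.reverse * X ^ b.natDegree) :
    a * b.reverse = b * a.reverse * X ^ (b.natDegree - a.natDegree) := by
  have hb : b ≠ 0 := fun hb => hb0 (by simp [hb])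
  have htb : b.natTrailingDegree = 0 := natTrailingDegree_eq_zero.2 (Or.inr hb0)
  have hdeg := congrArg natDegree h
  rw [natDegree_mul (by simpa using ⟨ha, hb⟩) (pow_ne_zero _ X_ne_zero),
    natDegree_mul (by simpa using ⟨hb, ha⟩) (pow_ne_zero _ X_ne_zero),
    natDegree_mul ha (by simpa using hb), natDegree_mul hb (by simpa using ha),
    natDegree_X_pow, natDegree_X_pow, reverse_natDegree, reverse_natDegree, htb] at hdeg
  have hle : a.natDegree ≤ b.natDegree := by
    have := natTrailingDegree_le_natDegree a
    omega
  apply mul_right_cancel₀ (pow_ne_zero a.natDegree (X_ne_zero : (X : R[X]) ≠ 0))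
  rw [h, mul_assoc (b * a.reverse), ← pow_add, Nat.sub_add_cancel hle]

section PartialProducts

variable (R : Type*) [CommRing R]

def partialProduct (N : ℕ) : R⟦X⟧⟦X⟧ := ∏ m ∈ range N, (1 + C (X ^ (m + 1)) * X) ^ (m + 1)

def partialPowerSum (k N : ℕ) : R⟦X⟧ := ∑ m ∈ range N, ((m + 1 : ℕ) : R⟦X⟧) * X ^ ((m + 1) * k)

theorem partialProduct_eq_prod_sigma (N : ℕ) :
    partialProduct R N = ∏ j : Σ m : Fin N, Fin (m + 1), (1 + C (X ^ (j.1.1 + 1)) * X) := by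
  rw [partialProduct, ← Fin.prod_univ_eq_prod_range, Fintype.prod_sigma]
  simp

theorem sum_sigma_pow_eq_partialPowerSum (k N : ℕ) :
    ∑ j : Σ m : Fin N, Fin (m + 1), (X ^ (j.1.1 + 1) : R⟦X⟧) ^ k = partialPowerSum R k N := by
  rw [partialPowerSum, ← Fin.sum_univ_eq_sum_range, Fintype.sum_sigma]
  simp [← pow_mul]

theorem natCast_mul_coeff_partialProduct (k N : ℕ) :
    k * coeff k (partialProduct R N) = (-1) ^ (k + 1) *
      ∑ a ∈ antidiagonal k with a.1 < k,
        (-1) ^ a.1 * coeff a.1 (partialProduct R N) * partialPowerSum R a.2 N := by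
  have h := natCast_mul_coeff_prod_one_add_C_mul_X
    (fun j : Σ m : Fin N, Fin (m + 1) => (X ^ (j.1.1 + 1) : R⟦X⟧)) k
  rw [← partialProduct_eq_prod_sigma] at h
  simpa only [sum_sigma_pow_eq_partialPowerSum] using h

theorem coeff_zero_partialProduct (N : ℕ) : coeff 0 (partialProduct R N) = 1 := by
  simp [partialProduct, map_prod]

theorem map_partialProduct {S : Type*} [CommRing S] (f : R →+* S) (N : ℕ) :
    map (map f) (partialProduct R N) = partialProduct S N := by
  simp [partialProduct, map_prod]

theorem one_sub_X_pow_sq_mul_partialPowerSum (k N : ℕ) :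
    (1 - X ^ k) ^ 2 * partialPowerSum R k N =
      X ^ k - X ^ (k * (N + 1)) * ((N + 1 : R⟦X⟧) - (N : R⟦X⟧) * X ^ k) := by
  induction N with
  | zero => simp [partialPowerSum]
  | succ N ih =>
    rw [partialPowerSum, sum_range_succ, mul_add, ← partialPowerSum, ih]
    push_cast
    ring

end PartialProducts

theorem IsPdFamily.tendsto_coeff_partialProduct {P : ℕ → ℤ⟦X⟧} (hP : IsPdFamily P) (d : ℕ) :
    Tendsto (fun N => coeff d (partialProduct ℚ N)) atTop (𝓝 ((P d).map (Int.castRingHom ℚ))) := by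
  rw [WithPiTopology.tendsto_iff_coeff_tendsto]
  intro n
  obtain ⟨s₀, hs₀⟩ := hP d n
  refine tendsto_const_nhds.congr' ?_
  filter_upwards [eventually_ge_atTop (s₀.sup id + 1)] with N hN
  have h := hs₀ (range N) ((subset_range_sup_succ s₀).trans (range_subset_range.2 hN))
  rw [coeff_mk] at h
  rw [← map_partialProduct ℤ (Int.castRingHom ℚ), coeff_map, coeff_map, coeff_map, partialProduct,
    h]

section InvInvariant

variable (K : Type*) [Field K]

def evalInvX : K[X] →+* RatFunc K :=
  Polynomial.eval₂RingHom (algebraMap K (RatFunc K)) RatFunc.X⁻¹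

/-- Power series expansions of fractions `a / b` with `b(0) ≠ 0` that are invariant under
`q ↦ 1/q`. -/
def invInvariantRational : Subalgebra K K⟦X⟧ where
  carrier := {F | ∃ a b : K[X], b.coeff 0 ≠ 0 ∧ (b : K⟦X⟧) * F = a ∧
    evalInvX K a * algebraMap K[X] (RatFunc K) b = algebraMap K[X] (RatFunc K) a * evalInvX K b}
  mul_mem' := by
    rintro F G ⟨a, b, hb, hF, ha⟩ ⟨c, e, he, hG, hc⟩
    refine ⟨a * c, b * e, by simpa using mul_ne_zero hb he, ?_, ?_⟩
    · rw [Polynomial.coe_mul, Polynomial.coe_mul, ← hF, ← hG]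
      ring
    · simp only [map_mul]
      linear_combination (evalInvX K c * algebraMap K[X] (RatFunc K) e) * ha +
        (algebraMap K[X] (RatFunc K) a * evalInvX K b) * hc
  add_mem' := by
    rintro F G ⟨a, b, hb, hF, ha⟩ ⟨c, e, he, hG, hc⟩
    refine ⟨a * e + c * b, b * e, by simpa using mul_ne_zero hb he, ?_, ?_⟩
    · rw [Polynomial.coe_add, Polynomial.coe_mul, Polynomial.coe_mul, Polynomial.coe_mul, ← hF,
        ← hG]
      ring
    · simp only [map_mul, map_add]
      linear_combination (evalInvX K e * algebraMap K[X] (RatFunc K) e) * ha +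
        (evalInvX K b * algebraMap K[X] (RatFunc K) b) * hc
  algebraMap_mem' r :=
    ⟨Polynomial.C r, 1, by simp, by simp [PowerSeries.algebraMap_eq], by simp [evalInvX]⟩

/-- `∑_{m ≥ 1} m q^{mk}`, the `k`-th power sum of the roots `q^m` (with multiplicity `m`). -/
def limitPowerSum (k : ℕ) : K⟦X⟧ := X ^ k * ((1 - X ^ k) ^ 2)⁻¹

variable {K}

theorem limitPowerSum_mem {k : ℕ} (hk : k ≠ 0) : limitPowerSum K k ∈ invInvariantRational K := by
  refine ⟨Polynomial.X ^ k, (1 - Polynomial.X ^ k) ^ 2, ?_, ?_, ?_⟩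
  · simp [Polynomial.coeff_zero_eq_eval_zero, hk]
  · rw [limitPowerSum, mul_left_comm]
    have hc : constantCoeff ((1 - X ^ k : K⟦X⟧) ^ 2) ≠ 0 := by simp [hk]
    simp [PowerSeries.mul_inv_cancel _ hc]
  · have hX : (RatFunc.X : RatFunc K) ≠ 0 := RatFunc.X_ne_zero
    simp only [evalInvX, map_pow, map_sub, map_one, Polynomial.coe_eval₂RingHom,
      Polynomial.eval₂_X, RatFunc.algebraMap_X, inv_pow]
    field_simp
    ring

theorem tendsto_partialPowerSum [TopologicalSpace K] {k : ℕ} (hk : k ≠ 0) :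
    Tendsto (partialPowerSum K k) atTop (𝓝 (limitPowerSum K k)) := by
  refine PowerSeries.tendsto_of_X_pow_dvd_sub fun N => ?_
  have hinv : ((1 - X ^ k : K⟦X⟧) ^ 2)⁻¹ * (1 - X ^ k) ^ 2 = 1 :=
    PowerSeries.inv_mul_cancel _ (by simp [hk])
  have hsub : partialPowerSum K k N - limitPowerSum K k =
      ((1 - X ^ k) ^ 2)⁻¹ * ((1 - X ^ k) ^ 2 * partialPowerSum K k N - X ^ k) := by
    rw [mul_sub, ← mul_assoc, hinv, one_mul, limitPowerSum, mul_comm (X ^ k)]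
  have hN : N ≤ k * (N + 1) := by nlinarith [Nat.one_le_iff_ne_zero.2 hk]
  rw [hsub, one_sub_X_pow_sq_mul_partialPowerSum, sub_sub_cancel_left]
  exact (dvd_neg.2 ((pow_dvd_pow X hN).mul_right _)).mul_left _

theorem natCast_mul_eq_of_tendsto [TopologicalSpace K] [IsTopologicalRing K] [T2Space K]
    {E : ℕ → K⟦X⟧} (hE : ∀ d, Tendsto (fun N => coeff d (partialProduct K N)) atTop (𝓝 (E d)))
    (d : ℕ) :
    d * E d = (-1) ^ (d + 1) *
      ∑ a ∈ antidiagonal d with a.1 < d, (-1) ^ a.1 * E a.1 * limitPowerSum K a.2 := by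
  refine tendsto_nhds_unique ((hE d).const_mul _) ?_
  simp_rw [natCast_mul_coeff_partialProduct]
  refine (tendsto_finsetSum _ fun a ha => ?_).const_mul _
  obtain ⟨hsum, hlt⟩ := mem_filter.1 ha
  rw [HasAntidiagonal.mem_antidiagonal] at hsum
  exact ((hE a.1).const_mul _).mul (tendsto_partialPowerSum (by omega))

theorem mem_invInvariantRational_of_recursion [CharZero K] {E : ℕ → K⟦X⟧}
    (h0 : E 0 ∈ invInvariantRational K)
    (hrec : ∀ d : ℕ, (d : K⟦X⟧) * E d = (-1) ^ (d + 1) *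
      ∑ a ∈ antidiagonal d with a.1 < d, (-1) ^ a.1 * E a.1 * limitPowerSum K a.2) (d : ℕ) :
    E d ∈ invInvariantRational K := by
  induction d using Nat.strong_induction_on with
  | _ d ih =>
  rcases eq_or_ne d 0 with rfl | hd
  · exact h0
  have hEd : E d = (d : K)⁻¹ • ((d : K⟦X⟧) * E d) := by
    rw [← map_natCast (algebraMap K K⟦X⟧), ← Algebra.smul_def, smul_smul,
      inv_mul_cancel₀ (Nat.cast_ne_zero.2 hd), one_smul]
  have hsign (n : ℕ) : ((-1) ^ n : K⟦X⟧) ∈ invInvariantRational K :=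
    pow_mem (neg_mem (one_mem _)) n
  rw [hEd, hrec]
  refine Subalgebra.smul_mem _ (mul_mem (hsign _) (sum_mem fun a ha => ?_)) _
  obtain ⟨hsum, hlt⟩ := mem_filter.1 ha
  rw [HasAntidiagonal.mem_antidiagonal] at hsum
  exact mul_mem (mul_mem (hsign _) (ih a.1 hlt)) (limitPowerSum_mem (by omega))

theorem algebraMap_reverse (p : K[X]) :
    algebraMap K[X] (RatFunc K) p.reverse = evalInvX K p * RatFunc.X ^ p.natDegree := by
  let : Invertible (RatFunc.X : RatFunc K)⁻¹ :=
    invertibleOfNonzero (inv_ne_zero RatFunc.X_ne_zero)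
  have h := Polynomial.eval₂_reverse_mul_pow (algebraMap K (RatFunc K)) (RatFunc.X)⁻¹ p
  have hX : Polynomial.eval₂ (algebraMap K (RatFunc K)) RatFunc.X p.reverse =
      algebraMap K[X] (RatFunc K) p.reverse :=
    Polynomial.eval₂_algebraMap_X _ (IsScalarTower.toAlgHom K K[X] (RatFunc K))
  rw [invOf_eq_inv, inv_inv, hX] at h
  rw [evalInvX, Polynomial.coe_eval₂RingHom, ← h, mul_assoc, ← mul_pow,
    inv_mul_cancel₀ RatFunc.X_ne_zero, one_pow, mul_one]

theorem mul_reverse_mul_X_pow_eq_of_invariant {a b : K[X]}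
    (h : evalInvX K a * algebraMap K[X] (RatFunc K) b =
      algebraMap K[X] (RatFunc K) a * evalInvX K b) :
    a * b.reverse * Polynomial.X ^ a.natDegree = b * a.reverse * Polynomial.X ^ b.natDegree := by
  apply RatFunc.algebraMap_injective K
  simp only [map_mul, map_pow, algebraMap_reverse, RatFunc.algebraMap_X]
  linear_combination (-(RatFunc.X ^ a.natDegree * RatFunc.X ^ b.natDegree : RatFunc K)) * h

theorem exists_mul_reverse_eq_of_mem_invInvariantRational {F : K⟦X⟧}
    (hF : F ∈ invInvariantRational K) :
    ∃ a b : K[X], b.coeff 0 ≠ 0 ∧ (b : K⟦X⟧) * F = a ∧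
      a * b.reverse = b * a.reverse * Polynomial.X ^ (b.natDegree - a.natDegree) := by
  obtain ⟨a, b, hb0, hba, hinv⟩ := hF
  refine ⟨a, b, hb0, hba, ?_⟩
  rcases eq_or_ne a 0 with rfl | ha
  · simp
  exact Polynomial.mul_reverse_eq_of_mul_X_pow_eq ha hb0
    (mul_reverse_mul_X_pow_eq_of_invariant hinv)

end InvInvariant

/-- Each `P_d(q)` is the power series expansion at `q = 0` of a rational
function which is invariant under `q ↦ 1/q`: there are polynomials `a, b ∈ ℚ[q]` with
`b(0) ≠ 0`, with `b(q)·P_d(q) = a(q)` in `ℚ⟦q⟧`, and with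
`a(q)·(q^{deg b}·b(1/q)) = b(q)·(q^{deg a}·a(1/q))·q^{deg b - deg a}` (the polynomial
`q^{deg p}·p(1/q)` being `Polynomial.reverse p`). -/
theorem Pd_rational_and_invariant_under_q_inv
    (P : ℕ → PowerSeries ℤ) (hP : IsPdFamily P) (d : ℕ) :
    ∃ a b : Polynomial ℚ, b.coeff 0 ≠ 0 ∧
      (b : PowerSeries ℚ) * (P d).map (Int.castRingHom ℚ) = (a : PowerSeries ℚ) ∧
      a * b.reverse = b * a.reverse * Polynomial.X ^ (b.natDegree - a.natDegree) := by
  have hlim := hP.tendsto_coeff_partialProduct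
  have h0 : (P 0).map (Int.castRingHom ℚ) = 1 :=
    tendsto_nhds_unique (hlim 0) (by simp [coeff_zero_partialProduct])
  exact exists_mul_reverse_eq_of_mem_invInvariantRational <|
    mem_invInvariantRational_of_recursion (E := fun d => (P d).map (Int.castRingHom ℚ))
      (h0 ▸ one_mem _) (natCast_mul_eq_of_tendsto hlim) d
end
end

section
/- The power series P_2(q) satisfies (1 − q)^4 (1 + q)^2 · P_2(q) = 2q^3 in ℤ⟦q⟧; equivalently, P_2(q) is the power series expansion of the rational function 2q^3/((1−q)^4 (1+q)^2), and hence (−1)^2 P_2(−q) is the expansion of −2q^3/((1+q)^4 (1−q)^2). -/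
open PowerSeries Finset

noncomputable section

/-!
Write a series with constant coefficient `1` as `1 + e₁ v + e₂ v² + ⋯`. The quantity
`p₂ = e₁² - 2 e₂` is additive over products, as is `e₁`. For the factor `(1 + qᵐ v)ᵐ` one has
`e₁ = m qᵐ` and `p₂ = m q²ᵐ`, so passing to the limit gives `2 P₂(q) = L(q)² - L(q²)` with
`L(x) = ∑ m xᵐ = x / (1 - x)²`. Clearing denominators, `(1 - q)⁴ (1 + q)² · 2 P₂(q)` equals
`(1 + q)² q² - (1 - q)² q² = 4 q³`.
-/

namespace PowerSeries

section SecondPowerSum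

variable {A : Type*} [CommRing A]

/-- For `f = ∏ᵢ (1 + aᵢ X)` this is `∑ᵢ aᵢ²`, by Newton's identity `p₂ = e₁² - 2 e₂`. -/
def secondPowerSum (f : A⟦X⟧) : A := coeff 1 f ^ 2 - 2 * coeff 2 f

theorem coeff_one_mul_of_constantCoeff_eq_one {f g : A⟦X⟧} (hf : constantCoeff f = 1)
    (hg : constantCoeff g = 1) : coeff 1 (f * g) = coeff 1 f + coeff 1 g := by
  rw [← coeff_zero_eq_constantCoeff_apply] at hf hg
  simp [coeff_mul, Finset.Nat.antidiagonal_succ, hf, hg, add_comm]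

theorem secondPowerSum_mul_of_constantCoeff_eq_one {f g : A⟦X⟧} (hf : constantCoeff f = 1)
    (hg : constantCoeff g = 1) :
    secondPowerSum (f * g) = secondPowerSum f + secondPowerSum g := by
  rw [← coeff_zero_eq_constantCoeff_apply] at hf hg
  simp [secondPowerSum, coeff_mul, Finset.Nat.antidiagonal_succ, hf, hg]
  ring

variable {ι : Type*} {s : Finset ι} {f : ι → A⟦X⟧}

theorem constantCoeff_prod_eq_one (hf : ∀ i ∈ s, constantCoeff (f i) = 1) :
    constantCoeff (∏ i ∈ s, f i) = 1 := by
  rw [map_prod]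
  exact prod_eq_one hf

theorem coeff_one_prod_of_constantCoeff_eq_one (hf : ∀ i ∈ s, constantCoeff (f i) = 1) :
    coeff 1 (∏ i ∈ s, f i) = ∑ i ∈ s, coeff 1 (f i) := by
  classical
  induction s using Finset.induction_on with
  | empty => simp
  | insert i s hi ih =>
    rw [forall_mem_insert] at hf
    rw [prod_insert hi, sum_insert hi, coeff_one_mul_of_constantCoeff_eq_one hf.1
      (constantCoeff_prod_eq_one hf.2), ih hf.2]

theorem secondPowerSum_prod_of_constantCoeff_eq_one (hf : ∀ i ∈ s, constantCoeff (f i) = 1) :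
    secondPowerSum (∏ i ∈ s, f i) = ∑ i ∈ s, secondPowerSum (f i) := by
  classical
  induction s using Finset.induction_on with
  | empty => simp [secondPowerSum]
  | insert i s hi ih =>
    rw [forall_mem_insert] at hf
    rw [prod_insert hi, sum_insert hi, secondPowerSum_mul_of_constantCoeff_eq_one hf.1
      (constantCoeff_prod_eq_one hf.2), ih hf.2]

theorem coeff_one_one_add_C_mul_X_pow (c : A) (n : ℕ) :
    coeff 1 ((1 + C c * X) ^ n) = n * c := by
  have h := coeff_one_prod_of_constantCoeff_eq_one (s := range n) (f := fun _ ↦ 1 + C c * X)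
    fun _ _ ↦ by simp
  rw [prod_const, card_range, sum_const, card_range, nsmul_eq_mul] at h
  rw [h]
  simp [coeff_one]

theorem secondPowerSum_one_add_C_mul_X_pow (c : A) (n : ℕ) :
    secondPowerSum ((1 + C c * X) ^ n) = n * c ^ 2 := by
  have h := secondPowerSum_prod_of_constantCoeff_eq_one (s := range n)
    (f := fun _ ↦ 1 + C c * X) fun _ _ ↦ by simp
  rw [prod_const, card_range, sum_const, card_range, nsmul_eq_mul] at h
  rw [h, secondPowerSum]
  simp [coeff_one]

end SecondPowerSum

namespace WithPiTopology

open Filter Topology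

variable {R : Type*} [CommRing R] [TopologicalSpace R]

theorem summable_succ_mul_pow {x : R⟦X⟧} (hx : constantCoeff x = 0) :
    Summable fun m : ℕ ↦ ((m + 1 : ℕ) : R⟦X⟧) * x ^ (m + 1) := by
  refine summable_of_tendsto_order_atTop_nhds_top R ?_
  refine ENat.tendsto_nhds_top_iff_natCast_lt.2 fun n ↦ eventually_atTop.2 ⟨n, fun m hm ↦ ?_⟩
  calc (n : ℕ∞) < (m + 1 : ℕ) := by exact_mod_cast Nat.lt_succ_of_le hm
    _ ≤ order (x ^ (m + 1)) := le_order_pow_of_constantCoeff_eq_zero _ hx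
    _ ≤ _ := le_add_self.trans (le_order_mul _ _)

theorem one_sub_sq_mul_tsum_succ_mul_pow [IsTopologicalRing R] [T2Space R] {x : R⟦X⟧}
    (hx : constantCoeff x = 0) :
    (1 - x) ^ 2 * ∑' m : ℕ, ((m + 1 : ℕ) : R⟦X⟧) * x ^ (m + 1) = x := by
  have hsum := summable_succ_mul_pow hx
  have hpartial (N : ℕ) : (1 - x) ^ 2 * ∑ m ∈ range N, ((m + 1 : ℕ) : R⟦X⟧) * x ^ (m + 1) =
      x - (1 - x) * (((N + 1 : ℕ) : R⟦X⟧) * x ^ (N + 1)) - x ^ 2 * x ^ N := by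
    induction N with
    | zero => simp; ring
    | succ N ih => rw [sum_range_succ, mul_add, ih]; push_cast; ring
  have hlim := (tendsto_const_nhds (x := x)).sub
    (hsum.tendsto_atTop_zero.const_mul (1 - x)) |>.sub
    ((summable_pow_of_constantCoeff_eq_zero hx).tendsto_atTop_zero.const_mul (x ^ 2))
  rw [mul_zero, mul_zero, sub_zero, sub_zero] at hlim
  refine tendsto_nhds_unique ((hsum.hasSum.mul_left ((1 - x) ^ 2)).tendsto_sum_nat) ?_
  simpa only [← mul_sum, hpartial] using hlim

end WithPiTopology

end PowerSeries

open Filter Topology PowerSeries.WithPiTopology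

theorem HasPSProd₂.tendsto_coeff {ι R : Type} [CommRing R] [TopologicalSpace R]
    [DiscreteTopology R] {f : ι → R⟦X⟧⟦X⟧} {F : R⟦X⟧⟦X⟧} (h : HasPSProd₂ f F) (d : ℕ) :
    Tendsto (fun s : Finset ι ↦ coeff d (∏ i ∈ s, f i)) atTop (𝓝 (coeff d F)) := by
  refine (tendsto_iff_coeff_tendsto _ _ _ _).2 fun a ↦ ?_
  obtain ⟨s₀, hs₀⟩ := h d a
  exact tendsto_nhds_of_eventually_eq (eventually_atTop.2 ⟨s₀, hs₀⟩)

theorem IsPdFamily.two_mul_apply_two {P : ℕ → ℤ⟦X⟧} (hP : IsPdFamily P) :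
    2 * P 2 = (∑' m : ℕ, ((m + 1 : ℕ) : ℤ⟦X⟧) * X ^ (m + 1)) ^ 2 -
      ∑' m : ℕ, ((m + 1 : ℕ) : ℤ⟦X⟧) * (X ^ 2) ^ (m + 1) := by
  have hfactor (m : ℕ) : constantCoeff ((1 + C ((X : ℤ⟦X⟧) ^ (m + 1)) * X) ^ (m + 1)) = 1 := by
    simp
  have hsum₁ : HasSum (fun m ↦ coeff 1 ((1 + C ((X : ℤ⟦X⟧) ^ (m + 1)) * X) ^ (m + 1)))
      (∑' m : ℕ, ((m + 1 : ℕ) : ℤ⟦X⟧) * X ^ (m + 1)) := by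
    simpa only [coeff_one_one_add_C_mul_X_pow] using (summable_succ_mul_pow constantCoeff_X).hasSum
  have hsum₂ : HasSum (fun m ↦ secondPowerSum ((1 + C ((X : ℤ⟦X⟧) ^ (m + 1)) * X) ^ (m + 1)))
      (∑' m : ℕ, ((m + 1 : ℕ) : ℤ⟦X⟧) * (X ^ 2) ^ (m + 1)) := by
    convert (summable_succ_mul_pow (x := (X : ℤ⟦X⟧) ^ 2) (by simp)).hasSum using 2 with m
    rw [secondPowerSum_one_add_C_mul_X_pow, ← pow_mul, ← pow_mul, mul_comm 2]
  have hP₂ := (hP.tendsto_coeff 2).const_mul 2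
  rw [coeff_mk] at hP₂
  refine tendsto_nhds_unique hP₂ (((hsum₁.pow 2).sub hsum₂).congr fun s ↦ ?_)
  rw [← coeff_one_prod_of_constantCoeff_eq_one fun m _ ↦ hfactor m,
    ← secondPowerSum_prod_of_constantCoeff_eq_one fun m _ ↦ hfactor m, secondPowerSum]
  ring

/-- `(1 - q)⁴ (1 + q)² · P₂(q) = 2q³` in `ℤ⟦q⟧`, i.e. `P₂(q)` is the
power series expansion of `2q³/((1-q)⁴(1+q)²)`; hence `(-1)² P₂(-q)` is the expansion of
`-2q³/((1+q)⁴(1-q)²)` (the substitution `q ↦ -q` being `PowerSeries.rescale (-1)`). -/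
theorem P_two (P : ℕ → PowerSeries ℤ) (hP : IsPdFamily P) :
    (1 - PowerSeries.X) ^ 4 * (1 + PowerSeries.X) ^ 2 * P 2 =
        2 * (PowerSeries.X : PowerSeries ℤ) ^ 3 ∧
      (1 + PowerSeries.X) ^ 4 * (1 - PowerSeries.X) ^ 2 *
          ((-1 : PowerSeries ℤ) ^ 2 * PowerSeries.rescale (-1) (P 2)) =
        -(2 * (PowerSeries.X : PowerSeries ℤ) ^ 3) := by
  set L := ∑' m : ℕ, ((m + 1 : ℕ) : ℤ⟦X⟧) * X ^ (m + 1)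
  have hL : (1 - X) ^ 2 * L = X := one_sub_sq_mul_tsum_succ_mul_pow constantCoeff_X
  have hL₂ := one_sub_sq_mul_tsum_succ_mul_pow (R := ℤ) (x := X ^ 2) (by simp)
  have htwo : (2 : ℤ⟦X⟧) ≠ 0 := fun h ↦ by simpa [map_ofNat] using congrArg constantCoeff h
  have h₁ : (1 - X) ^ 4 * (1 + X) ^ 2 * P 2 = 2 * (X : ℤ⟦X⟧) ^ 3 := by
    refine mul_left_cancel₀ htwo ?_
    linear_combination (1 - X) ^ 4 * (1 + X) ^ 2 * hP.two_mul_apply_two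
      + (1 + X) ^ 2 * ((1 - X) ^ 2 * L + X) * hL
      - (1 - X) ^ 2 * hL₂
  refine ⟨h₁, ?_⟩
  have h₂ := congrArg (rescale (-1 : ℤ)) h₁
  simp only [map_mul, map_pow, map_sub, map_add, map_one, map_ofNat, rescale_X, map_neg] at h₂
  linear_combination h₂
end
end

section
/- (MacMahon's formula) The generating function for plane partitions satisfies ∑_{n=0}^∞ pp(n) q^n = ∏_{m=1}^∞ (1 − q^m)^{−m} in ℤ⟦q⟧, where pp(n) denotes the number of plane partitions of n. -/
open PowerSeries Finset

noncomputable section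

/-- Convergence (in the formal, i.e. coefficientwise, topology of `R⟦q⟧`) of the
infinite product of the family `f` to the power series `F`. -/
def HasPSProd {ι : Type} {R : Type} [CommRing R] (f : ι → PowerSeries R)
    (F : PowerSeries R) : Prop :=
  ∀ n : ℕ, ∃ s₀ : Finset ι, ∀ s : Finset ι, s₀ ⊆ s →
    (PowerSeries.coeff (R := R) n) (∏ i ∈ s, f i) = (PowerSeries.coeff (R := R) n) F

/-- `M = M(q) = ∏_{m=1}^∞ (1 - q^m)^{-m}`, the MacMahon function in `ℤ⟦q⟧`
(`m ≥ 1` is encoded as `m + 1` for `m : ℕ`). -/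
def IsMacMahon (M : PowerSeries ℤ) : Prop :=
  HasPSProd
    (fun m : ℕ => Ring.inverse ((1 - (PowerSeries.X : PowerSeries ℤ) ^ (m + 1)) ^ (m + 1))) M

/-- `pp n`: the number of plane partitions of `n`, i.e. of finite lower sets in `ℕ³`
(with the componentwise order) of cardinality `n`. -/
def pp (n : ℕ) : ℕ :=
  Nat.card {π : Finset (ℕ × ℕ × ℕ) // IsLowerSet (π : Set (ℕ × ℕ × ℕ)) ∧ π.card = n}

/-!
Stack `π i j` cubes on the cell `(i, j)` of the quadrant `ℕ × ℕ`. The zigzag path of a nonempty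
plane partition starts on top of the last nonempty column `b` of row `0` and walks down each
column to the end of its run of equal entries, then steps one column to the left, until it leaves
column `0` in some row `e`. Removing one cube from every cell of the path leaves a plane
partition, and the path has `e + b + 1` cells: the hook length of the cell `(e, b)`. Recording
`(e, b)` and repeating until nothing is left turns a plane partition with `n` cubes into a filling
of the quadrant of weight `n`, every cell counted with its hook length. The recorded cells never
decrease in a fixed linear order, so the filling tells in which order to add the paths back, and
this is a bijection (a variant of the Hillman–Grassl correspondence). Since exactly `m` cells have
hook length `m`, fillings of weight `n` are counted by the coefficient of `qⁿ` in
`∏ₘ (1 - q^m)^(-m)`.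
-/

namespace MacMahon

section PowerSeries

variable {R : Type*} [CommRing R]

variable (R) in
def invOneSubXPow (k : ℕ) : R⟦X⟧ := mk fun n => if k ∣ n then 1 else 0

lemma coeff_invOneSubXPow (k n : ℕ) :
    coeff n (invOneSubXPow R k) = if k ∣ n then 1 else 0 :=
  coeff_mk n _

lemma one_sub_X_pow_mul_invOneSubXPow {k : ℕ} (hk : k ≠ 0) :
    (1 - X ^ k) * invOneSubXPow R k = 1 := by
  ext n
  rw [sub_mul, one_mul, map_sub, coeff_X_pow_mul', coeff_invOneSubXPow, coeff_one]
  rcases Nat.eq_zero_or_pos n with rfl | hn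
  · simp [hk]
  · by_cases hkn : k ≤ n
    · simp only [if_pos hkn, coeff_invOneSubXPow, Nat.dvd_sub_iff_left hkn dvd_rfl, if_neg hn.ne',
        sub_self]
    · have hdvd : ¬k ∣ n := fun h => hkn (Nat.le_of_dvd hn h)
      simp [hkn, hdvd, hn.ne']

lemma ring_inverse_one_sub_X_pow_pow {k : ℕ} (hk : k ≠ 0) (m : ℕ) :
    Ring.inverse ((1 - X ^ k) ^ m : R⟦X⟧) = invOneSubXPow R k ^ m := by
  have h : (1 - X ^ k) ^ m * invOneSubXPow R k ^ m = 1 := by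
    rw [← mul_pow, one_sub_X_pow_mul_invOneSubXPow hk, one_pow]
  exact Ring.inverse_unit ⟨_, _, h, by rw [mul_comm, h]⟩

end PowerSeries

section Fillings

def hookLength (p : ℕ × ℕ) : ℕ := p.1 + p.2 + 1

lemma hookLength_pos (p : ℕ × ℕ) : 0 < hookLength p := Nat.succ_pos _

lemma prod_pow_succ_eq_prod_hookLength {M : Type*} [CommMonoid M] (g : ℕ → M) (s : Finset ℕ) :
    ∏ m ∈ s, g (m + 1) ^ (m + 1) = ∏ p ∈ s.biUnion antidiagonal, g (hookLength p) := by
  rw [prod_biUnion]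
  · refine prod_congr rfl fun m _ => ?_
    rw [prod_congr rfl fun p hp => by rw [hookLength, mem_antidiagonal.mp hp], prod_const,
      Nat.card_antidiagonal]
  · intro m _ m' _ hm
    exact disjoint_left.mpr fun p hp hp' =>
      hm ((mem_antidiagonal.mp hp).symm.trans (mem_antidiagonal.mp hp'))

def weight (a : ℕ × ℕ →₀ ℕ) : ℕ := a.sum fun p k => hookLength p * k

lemma weight_add (a b : ℕ × ℕ →₀ ℕ) : weight (a + b) = weight a + weight b :=
  Finsupp.sum_add_index' (fun _ => mul_zero _) (fun _ _ _ => mul_add _ _ _)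

lemma weight_single (p : ℕ × ℕ) (k : ℕ) : weight (Finsupp.single p k) = hookLength p * k :=
  Finsupp.sum_single_index (mul_zero _)

lemma weight_eq_sum {a : ℕ × ℕ →₀ ℕ} {T : Finset (ℕ × ℕ)} (h : a.support ⊆ T) :
    weight a = ∑ p ∈ T, hookLength p * a p :=
  Finsupp.sum_of_support_subset a h _ fun _ _ => mul_zero _

lemma hookLength_le_weight {a : ℕ × ℕ →₀ ℕ} {p : ℕ × ℕ} (hp : p ∈ a.support) :
    hookLength p ≤ weight a :=
  calc hookLength p ≤ hookLength p * a p :=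
        Nat.le_mul_of_pos_right _ (Nat.pos_of_ne_zero (Finsupp.mem_support_iff.mp hp))
    _ ≤ weight a := by
        rw [weight_eq_sum subset_rfl]
        exact single_le_sum (f := fun q => hookLength q * a q) (fun _ _ => Nat.zero_le _) hp

def mulHookLength (a : ℕ × ℕ →₀ ℕ) : ℕ × ℕ →₀ ℕ :=
  Finsupp.onFinset a.support (fun p => hookLength p * a p) fun _ hp =>
    Finsupp.mem_support_iff.mpr (right_ne_zero_of_mul hp)

def divHookLength (l : ℕ × ℕ →₀ ℕ) : ℕ × ℕ →₀ ℕ :=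
  Finsupp.onFinset l.support (fun p => l p / hookLength p) fun _ hp =>
    Finsupp.mem_support_iff.mpr fun h => hp (by rw [h, Nat.zero_div])

variable {n : ℕ} {T : Finset (ℕ × ℕ)}

lemma mulHookLength_mem (hT : ∀ p, hookLength p ≤ n → p ∈ T) {a : ℕ × ℕ →₀ ℕ}
    (ha : weight a = n) :
    mulHookLength a ∈ {l ∈ finsuppAntidiag T n | ∀ p ∈ T, hookLength p ∣ l p} := by
  have hsupp : a.support ⊆ T := fun p hp => hT p (ha ▸ hookLength_le_weight hp)
  refine mem_filter.mpr ⟨mem_finsuppAntidiag.mpr ⟨?_, ?_⟩, fun _ _ => Dvd.intro _ rfl⟩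
  · rw [← ha, weight_eq_sum hsupp]
    rfl
  · exact Finsupp.support_onFinset_subset.trans hsupp

lemma weight_divHookLength {l : ℕ × ℕ →₀ ℕ}
    (hl : l ∈ {l ∈ finsuppAntidiag T n | ∀ p ∈ T, hookLength p ∣ l p}) :
    weight (divHookLength l) = n := by
  obtain ⟨hl, hdvd⟩ := mem_filter.mp hl
  obtain ⟨hsum, hsupp⟩ := mem_finsuppAntidiag.mp hl
  rw [weight_eq_sum (a := divHookLength l) (Finsupp.support_onFinset_subset.trans hsupp), ← hsum]
  exact sum_congr rfl fun p hp => Nat.mul_div_cancel' (hdvd p hp)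

def mulHookLengthEquiv (hT : ∀ p, hookLength p ≤ n → p ∈ T) :
    {a : ℕ × ℕ →₀ ℕ // weight a = n} ≃
      {l // l ∈ {l ∈ finsuppAntidiag T n | ∀ p ∈ T, hookLength p ∣ l p}} where
  toFun a := ⟨mulHookLength a.1, mulHookLength_mem hT a.2⟩
  invFun l := ⟨divHookLength l.1, weight_divHookLength l.2⟩
  left_inv a := Subtype.ext <| Finsupp.ext fun p =>
    Nat.mul_div_cancel_left _ (hookLength_pos p)
  right_inv l := by
    obtain ⟨hl, hdvd⟩ := mem_filter.mp l.2
    refine Subtype.ext <| Finsupp.ext fun p => ?_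
    by_cases hp : p ∈ T
    · exact Nat.mul_div_cancel' (hdvd p hp)
    · have : l.1 p = 0 := Finsupp.notMem_support_iff.mp
        fun h => hp ((mem_finsuppAntidiag.mp hl).2 h)
      simp [mulHookLength, divHookLength, this]

lemma coeff_prod_invOneSubXPow_pow {R : Type*} [CommRing R] {s : Finset ℕ} (hs : range n ⊆ s) :
    coeff n (∏ m ∈ s, invOneSubXPow R (m + 1) ^ (m + 1)) =
      Nat.card {a : ℕ × ℕ →₀ ℕ // weight a = n} := by
  rw [prod_pow_succ_eq_prod_hookLength, coeff_prod]
  simp only [coeff_invOneSubXPow, prod_boole, sum_boole]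
  have hT : ∀ p, hookLength p ≤ n → p ∈ s.biUnion antidiagonal := fun p hp =>
    mem_biUnion.mpr ⟨p.1 + p.2, hs (mem_range.mpr hp), mem_antidiagonal.mpr rfl⟩
  rw [Nat.card_congr (mulHookLengthEquiv hT), Nat.card_eq_finsetCard]

end Fillings

def Staircase (b : ℕ) (r : ℕ → ℕ) (i j : ℕ) : Prop := j ≤ b ∧ r (j + 1) ≤ i ∧ i ≤ r j

instance (b : ℕ) (r : ℕ → ℕ) (i j : ℕ) : Decidable (Staircase b r i j) :=
  inferInstanceAs (Decidable (_ ∧ _ ∧ _))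

lemma staircase_congr {b : ℕ} {r r' : ℕ → ℕ} (h : ∀ j ≤ b + 1, r j = r' j) (i j : ℕ) :
    Staircase b r i j ↔ Staircase b r' i j := by
  unfold Staircase
  constructor <;> rintro ⟨hj, h₁, h₂⟩ <;>
    simp only [h j (by omega), h (j + 1) (by omega)] at * <;> exact ⟨hj, h₁, h₂⟩

lemma sum_staircase_boole {b N : ℕ} {r : ℕ → ℕ} (hr : ∀ j, r (j + 1) ≤ r j)
    (hb : r (b + 1) = 0) (hbN : b < N) (hrN : r 0 < N) :
    ∑ p ∈ range N ×ˢ range N, (if Staircase b r p.1 p.2 then 1 else 0) = r 0 + b + 1 := by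
  have hcol : ∀ j ∈ range N, ∑ i ∈ range N, (if Staircase b r i j then 1 else 0) =
      if j ≤ b then r j + 1 - r (j + 1) else 0 := fun j _ => by
    have hrj : r j ≤ r 0 := antitone_nat_of_succ_le hr (Nat.zero_le j)
    split_ifs with hj
    · rw [sum_boole, Nat.cast_id, ← Nat.card_Icc]
      congr 1
      ext i
      rw [mem_filter, mem_range, mem_Icc, Staircase]
      omega
    · exact sum_eq_zero fun i _ => if_neg fun h => hj h.1
  have htele : ∀ m, ∑ j ∈ range m, (r j + 1 - r (j + 1)) = m + r 0 - r m := fun m => by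
    induction m with
    | zero => simp
    | succ m ih =>
      have := antitone_nat_of_succ_le hr (Nat.zero_le m)
      have := hr m
      rw [sum_range_succ, ih]
      omega
  have hcols : {j ∈ range N | j ≤ b} = range (b + 1) := by
    ext j
    simp only [mem_filter, mem_range]
    omega
  rw [sum_product_right, sum_congr rfl hcol, ← sum_filter, hcols, htele, hb]
  omega

/-- Successive zigzag paths are removed in weakly increasing order of their end cells for this
key. -/
def cellKey (c : ℕ × ℕ) : ℕᵒᵈ ×ₗ ℕ := toLex (OrderDual.toDual c.2, c.1)

lemma cellKey_le_iff {c d : ℕ × ℕ} :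
    cellKey c ≤ cellKey d ↔ d.2 < c.2 ∨ d.2 = c.2 ∧ c.1 ≤ d.1 := by
  simp only [cellKey, Prod.Lex.toLex_le_toLex, OrderDual.toDual_lt_toDual, OrderDual.toDual_inj,
    eq_comm]

lemma cellKey_injective : Function.Injective cellKey := fun c d h => by
  simp only [cellKey, EmbeddingLike.apply_eq_iff_eq, Prod.mk.injEq] at h
  exact Prod.ext h.2 h.1

/-- A plane partition, given by its height function: `π i j` cubes are stacked on the cell
`(i, j)`. -/
@[ext]
structure PlanePartition where
  toFun : ℕ → ℕ → ℕ
  succ_left_le' : ∀ i j, toFun (i + 1) j ≤ toFun i j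
  succ_right_le' : ∀ i j, toFun i (j + 1) ≤ toFun i j
  exists_eq_zero' : ∃ N, toFun N 0 = 0 ∧ toFun 0 N = 0

namespace PlanePartition

instance : CoeFun PlanePartition fun _ => ℕ → ℕ → ℕ := ⟨toFun⟩

instance : Zero PlanePartition :=
  ⟨⟨fun _ _ => 0, fun _ _ => le_rfl, fun _ _ => le_rfl, ⟨0, rfl, rfl⟩⟩⟩

variable (π : PlanePartition) {i i' j j' r : ℕ}

lemma apply_le_apply (hi : i ≤ i') (hj : j ≤ j') : π i' j' ≤ π i j :=
  (antitone_nat_of_succ_le (f := (π · j')) (π.succ_left_le' · j') hi).trans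
    (antitone_nat_of_succ_le (π.succ_right_le' i) hj)

lemma apply_eq_zero_of_le (h : π i j = 0) (hi : i ≤ i') (hj : j ≤ j') : π i' j' = 0 :=
  Nat.eq_zero_of_le_zero (h ▸ π.apply_le_apply hi hj)

lemma eq_zero_of_apply_zero_zero (h : π 0 0 = 0) : π = 0 := by
  ext i j
  exact π.apply_eq_zero_of_le h (Nat.zero_le i) (Nat.zero_le j)

def bound : ℕ := Nat.find π.exists_eq_zero'

lemma apply_eq_zero_of_bound_le (h : π.bound ≤ i ∨ π.bound ≤ j) : π i j = 0 := by
  obtain ⟨h₁, h₂⟩ := Nat.find_spec π.exists_eq_zero'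
  rcases h with h | h
  · exact π.apply_eq_zero_of_le h₁ h (Nat.zero_le j)
  · exact π.apply_eq_zero_of_le h₂ (Nat.zero_le i) h

lemma lt_bound_of_apply_ne_zero (h : π i j ≠ 0) : i < π.bound ∧ j < π.bound := by
  by_contra hb
  exact h (π.apply_eq_zero_of_bound_le (by omega))

def size : ℕ := ∑ p ∈ range π.bound ×ˢ range π.bound, π p.1 p.2

lemma size_eq_sum {N : ℕ} (hN : π.bound ≤ N) :
    π.size = ∑ p ∈ range N ×ˢ range N, π p.1 p.2 :=
  sum_subset (product_subset_product (range_subset_range.mpr hN) (range_subset_range.mpr hN))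
    fun p _ hp => π.apply_eq_zero_of_bound_le (by simp only [mem_product, mem_range] at hp; omega)

@[simp]
lemma size_zero : (0 : PlanePartition).size = 0 := sum_eq_zero fun _ _ => rfl

/-! ### Runs of equal entries in a column -/

def runStart (j r : ℕ) : ℕ := Nat.find (⟨r, rfl⟩ : ∃ i, π i j = π r j)

lemma runStart_le (j r : ℕ) : π.runStart j r ≤ r := Nat.find_le rfl

lemma runStart_le_of_apply_eq (h : π i j = π r j) : π.runStart j r ≤ i := Nat.find_le h

lemma apply_eq_of_runStart_le (h₁ : π.runStart j r ≤ i) (h₂ : i ≤ r) : π i j = π r j :=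
  le_antisymm
    ((π.apply_le_apply h₁ le_rfl).trans_eq (Nat.find_spec (⟨r, rfl⟩ : ∃ i, π i j = π r j)))
    (π.apply_le_apply h₂ le_rfl)

lemma lt_apply_of_lt_runStart (h : i < π.runStart j r) : π r j < π i j :=
  lt_of_le_of_ne (π.apply_le_apply (h.le.trans (π.runStart_le j r)) le_rfl)
    fun he => Nat.find_min _ h he.symm

lemma le_runStart {m : ℕ} (h : ∀ i < m, π r j < π i j) : m ≤ π.runStart j r := by
  by_contra hm
  have := h _ (not_le.mp hm)
  rw [π.apply_eq_of_runStart_le le_rfl (π.runStart_le j r)] at this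
  exact lt_irrefl _ this

lemma runStart_eq_zero (h : π 0 j = 0) (r : ℕ) : π.runStart j r = 0 :=
  Nat.eq_zero_of_le_zero <| π.runStart_le_of_apply_eq <| by
    rw [h, π.apply_eq_zero_of_le h (Nat.zero_le r) le_rfl]

def runEnd (j r : ℕ) : ℕ := Nat.findGreatest (fun i => π i j = π r j) (r + π.bound)

lemma le_runEnd (j r : ℕ) : r ≤ π.runEnd j r := Nat.le_findGreatest (by omega) rfl

lemma apply_eq_of_le_runEnd (h₁ : r ≤ i) (h₂ : i ≤ π.runEnd j r) : π i j = π r j :=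
  le_antisymm (π.apply_le_apply h₁ le_rfl)
    ((Nat.findGreatest_spec (P := fun i => π i j = π r j) (by omega) rfl).symm.trans_le
      (π.apply_le_apply h₂ le_rfl))

lemma le_runEnd_of_apply_eq (h₀ : π r j ≠ 0) (h : π i j = π r j) : i ≤ π.runEnd j r :=
  Nat.le_findGreatest (by have := π.lt_bound_of_apply_ne_zero (h ▸ h₀); omega) h

lemma apply_runEnd_succ_lt (h₀ : π r j ≠ 0) : π (π.runEnd j r + 1) j < π r j :=
  lt_of_le_of_ne (π.apply_le_apply ((π.le_runEnd j r).trans (Nat.le_succ _)) le_rfl)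
    fun h => by have := π.le_runEnd_of_apply_eq h₀ h; omega

lemma runEnd_le_of_apply_ne {m : ℕ} (hr : r ≤ m) (h : π (m + 1) j ≠ π r j) :
    π.runEnd j r ≤ m := by
  by_contra hm
  exact h (π.apply_eq_of_le_runEnd (by omega) (by omega))

/-! ### Removing a zigzag path -/

def lastCol : ℕ := Nat.findGreatest (fun j => π 0 j ≠ 0) π.bound

lemma apply_zero_ne_zero_iff (hπ : π 0 0 ≠ 0) : π 0 j ≠ 0 ↔ j ≤ π.lastCol := by
  constructor
  · intro h
    exact Nat.le_findGreatest (π.lt_bound_of_apply_ne_zero h).2.le h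
  · intro h h0
    exact Nat.findGreatest_spec (P := fun j => π 0 j ≠ 0) (Nat.zero_le _) hπ
      (π.apply_eq_zero_of_le h0 le_rfl h)

lemma lastCol_eq {b : ℕ} (h₁ : π 0 b ≠ 0) (h₂ : π 0 (b + 1) = 0) : π.lastCol = b := by
  have hπ : π 0 0 ≠ 0 := fun h => h₁ (π.apply_eq_zero_of_le h le_rfl (Nat.zero_le b))
  have := (π.apply_zero_ne_zero_iff hπ).mp h₁
  have := mt (π.apply_zero_ne_zero_iff hπ (j := b + 1)).mpr (not_not.mpr h₂)
  omega

/-- `π.exitRow j` is the row in which the zigzag path leaves column `j`; it enters column `j`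
at row `π.exitRow (j + 1)` and runs down the column as long as the entries stay constant. -/
def exitRow (j : ℕ) : ℕ :=
  if j ≤ π.lastCol then π.runEnd j (exitRow (j + 1)) else 0
termination_by π.lastCol + 1 - j

lemma exitRow_of_le (hj : j ≤ π.lastCol) : π.exitRow j = π.runEnd j (π.exitRow (j + 1)) := by
  rw [exitRow, if_pos hj]

lemma exitRow_of_lt (hj : π.lastCol < j) : π.exitRow j = 0 := by
  rw [exitRow, if_neg (by omega)]

lemma exitRow_succ_le (j : ℕ) : π.exitRow (j + 1) ≤ π.exitRow j := by
  by_cases hj : j ≤ π.lastCol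
  · exact (π.exitRow_of_le hj).symm ▸ π.le_runEnd _ _
  · rw [π.exitRow_of_lt (by omega : π.lastCol < j + 1)]
    exact Nat.zero_le _

def hookCell : ℕ × ℕ := (π.exitRow 0, π.lastCol)

lemma apply_eq_apply_exitRow_succ (hj : j ≤ π.lastCol) (h₁ : π.exitRow (j + 1) ≤ i)
    (h₂ : i ≤ π.exitRow j) : π i j = π (π.exitRow (j + 1)) j :=
  π.apply_eq_of_le_runEnd h₁ (π.exitRow_of_le hj ▸ h₂)

lemma apply_exitRow_succ_ne_zero (hπ : π 0 0 ≠ 0) (j : ℕ) (hj : j ≤ π.lastCol) :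
    π (π.exitRow (j + 1)) j ≠ 0 := by
  rcases hj.lt_or_eq with hj | rfl
  · replace hj : j + 1 ≤ π.lastCol := hj
    have ih := apply_exitRow_succ_ne_zero hπ (j + 1) hj
    rw [← π.apply_eq_apply_exitRow_succ hj (π.exitRow_succ_le _) le_rfl] at ih
    exact fun h => ih (π.apply_eq_zero_of_le h le_rfl (Nat.le_succ j))
  · rw [π.exitRow_of_lt (lt_add_one _)]
    exact (π.apply_zero_ne_zero_iff hπ).mpr le_rfl
termination_by π.lastCol - j

lemma apply_exitRow_add_one_lt (hπ : π 0 0 ≠ 0) (hj : j ≤ π.lastCol) :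
    π (π.exitRow j + 1) j < π (π.exitRow (j + 1)) j :=
  π.exitRow_of_le hj ▸ π.apply_runEnd_succ_lt (π.apply_exitRow_succ_ne_zero hπ j hj)

lemma apply_ne_zero_of_staircase (hπ : π 0 0 ≠ 0)
    (h : Staircase π.lastCol π.exitRow i j) : π i j ≠ 0 := by
  obtain ⟨hj, h₁, h₂⟩ := h
  rw [π.apply_eq_apply_exitRow_succ hj h₁ h₂]
  exact π.apply_exitRow_succ_ne_zero hπ j hj

lemma apply_zero_eq_zero_of_lastCol_lt (hπ : π 0 0 ≠ 0) (hj : π.lastCol < j) : π 0 j = 0 :=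
  not_not.mp (mt (π.apply_zero_ne_zero_iff hπ).mp (by omega))

def removeZigzag (hπ : π 0 0 ≠ 0) : PlanePartition where
  toFun i j := π i j - if Staircase π.lastCol π.exitRow i j then 1 else 0
  succ_left_le' i j := by
    by_cases h₁ : Staircase π.lastCol π.exitRow (i + 1) j <;>
      by_cases h₂ : Staircase π.lastCol π.exitRow i j <;>
      simp only [h₁, h₂, if_true, if_false, Nat.sub_zero]
    · exact Nat.sub_le_sub_right (π.succ_left_le' i j) 1
    · exact (Nat.sub_le _ _).trans (π.succ_left_le' i j)
    · obtain ⟨hj, ha, hb⟩ := h₂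
      have hi : i = π.exitRow j := by by_contra; exact h₁ ⟨hj, by omega, by omega⟩
      suffices π (i + 1) j < π i j by omega
      rw [π.apply_eq_apply_exitRow_succ hj ha hb, hi]
      exact π.apply_exitRow_add_one_lt hπ hj
    · exact π.succ_left_le' i j
  succ_right_le' i j := by
    by_cases h₁ : Staircase π.lastCol π.exitRow i (j + 1) <;>
      by_cases h₂ : Staircase π.lastCol π.exitRow i j <;>
      simp only [h₁, h₂, if_true, if_false, Nat.sub_zero]
    · exact Nat.sub_le_sub_right (π.succ_right_le' i j) 1
    · exact (Nat.sub_le _ _).trans (π.succ_right_le' i j)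
    · have hne := π.apply_ne_zero_of_staircase hπ h₂
      suffices π i (j + 1) < π i j by omega
      obtain ⟨hj, ha, hb⟩ := h₂
      rcases hj.lt_or_eq with hj | rfl
      · replace hj : j + 1 ≤ π.lastCol := hj
        have hi : π.exitRow (j + 1) < i := by
          by_contra
          exact h₁ ⟨hj, (π.exitRow_succ_le _).trans (by omega), by omega⟩
        calc π i (j + 1) ≤ π (π.exitRow (j + 1) + 1) (j + 1) := π.apply_le_apply hi le_rfl
          _ < π (π.exitRow (j + 1 + 1)) (j + 1) := π.apply_exitRow_add_one_lt hπ hj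
          _ = π (π.exitRow (j + 1)) (j + 1) :=
            (π.apply_eq_apply_exitRow_succ hj (π.exitRow_succ_le _) le_rfl).symm
          _ ≤ π (π.exitRow (j + 1)) j := π.succ_right_le' _ j
          _ = π i j := (π.apply_eq_apply_exitRow_succ (Nat.le_of_succ_le hj) ha hb).symm
      · rw [π.apply_eq_zero_of_le (π.apply_zero_eq_zero_of_lastCol_lt hπ (lt_add_one _))
          (Nat.zero_le i) le_rfl]
        exact Nat.pos_of_ne_zero hne
    · exact π.succ_right_le' i j
  exists_eq_zero' := ⟨π.bound, by
    simp [π.apply_eq_zero_of_bound_le (i := π.bound) (j := 0) (Or.inl le_rfl),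
      π.apply_eq_zero_of_bound_le (i := 0) (j := π.bound) (Or.inr le_rfl)]⟩

lemma removeZigzag_apply (hπ : π 0 0 ≠ 0) (i j : ℕ) :
    π.removeZigzag hπ i j = π i j - if Staircase π.lastCol π.exitRow i j then 1 else 0 := rfl

/-! ### Adding a zigzag path -/

/-- The zigzag path added for the cell `c` leaves column `0` at row `c.1`, and climbs each column
to the top of its run of equal entries before moving on to the next column. -/
def addRow (c : ℕ × ℕ) : ℕ → ℕ
  | 0 => c.1
  | j + 1 => π.runStart j (addRow c j)

lemma addRow_succ (c : ℕ × ℕ) (j : ℕ) : π.addRow c (j + 1) = π.runStart j (π.addRow c j) := rfl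

lemma addRow_succ_le (c : ℕ × ℕ) (j : ℕ) : π.addRow c (j + 1) ≤ π.addRow c j :=
  π.runStart_le _ _

def addZigzag (c : ℕ × ℕ) : PlanePartition where
  toFun i j := π i j + if Staircase c.2 (π.addRow c) i j then 1 else 0
  succ_left_le' i j := by
    by_cases h₁ : Staircase c.2 (π.addRow c) (i + 1) j <;>
      by_cases h₂ : Staircase c.2 (π.addRow c) i j <;>
      simp only [h₁, h₂, if_true, if_false, add_zero]
    · exact Nat.add_le_add_right (π.succ_left_le' i j) 1
    · obtain ⟨hj, ha, hb⟩ := h₁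
      have hi : i < π.runStart j (π.addRow c j) := by
        by_contra
        exact h₂ ⟨hj, by rw [addRow_succ]; omega, by omega⟩
      have := π.lt_apply_of_lt_runStart hi
      rw [π.apply_eq_of_runStart_le ha hb]
      omega
    · exact (π.succ_left_le' i j).trans (Nat.le_succ _)
    · exact π.succ_left_le' i j
  succ_right_le' i j := by
    by_cases h₁ : Staircase c.2 (π.addRow c) i (j + 1) <;>
      by_cases h₂ : Staircase c.2 (π.addRow c) i j <;>
      simp only [h₁, h₂, if_true, if_false, add_zero]
    · exact Nat.add_le_add_right (π.succ_right_le' i j) 1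
    · obtain ⟨hj, ha, hb⟩ := h₁
      have hi : i < π.runStart j (π.addRow c j) := by
        by_contra
        exact h₂ ⟨by omega, by rw [addRow_succ]; omega, hb.trans (π.addRow_succ_le c j)⟩
      calc π i (j + 1) + 1 = π (π.addRow c (j + 1)) (j + 1) + 1 := by
            rw [π.apply_eq_of_runStart_le ha hb]
        _ ≤ π (π.addRow c (j + 1)) j + 1 := Nat.add_le_add_right (π.succ_right_le' _ j) 1
        _ = π (π.addRow c j) j + 1 := by
            rw [π.apply_eq_of_runStart_le (i := π.addRow c (j + 1)) le_rfl (π.addRow_succ_le c j)]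
        _ ≤ π i j := π.lt_apply_of_lt_runStart hi
    · exact (π.succ_right_le' i j).trans (Nat.le_succ _)
    · exact π.succ_right_le' i j
  exists_eq_zero' := by
    refine ⟨max π.bound (max (c.1 + 1) (c.2 + 1)), ?_, ?_⟩
    · have : π.addRow c 0 = c.1 := rfl
      rw [π.apply_eq_zero_of_bound_le (Or.inl (le_max_left _ _)), if_neg fun h => by
        have := h.2.2; omega]
    · rw [π.apply_eq_zero_of_bound_le (Or.inr (le_max_left _ _)), if_neg fun h => by
        have := h.1; omega]

lemma addZigzag_apply (c : ℕ × ℕ) (i j : ℕ) :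
    π.addZigzag c i j = π i j + if Staircase c.2 (π.addRow c) i j then 1 else 0 := rfl

def CanAdd (c : ℕ × ℕ) : Prop := π 0 0 ≠ 0 → cellKey c ≤ cellKey π.hookCell

variable {π} {c : ℕ × ℕ}

lemma addRow_le_exitRow (h : c.1 ≤ π.exitRow 0) : ∀ j, π.addRow c j ≤ π.exitRow j
  | 0 => h
  | j + 1 => by
    have ih := addRow_le_exitRow h j
    have := π.runStart_le j (π.addRow c j)
    rw [addRow_succ]
    by_cases hj : j ≤ π.lastCol
    · by_cases hlt : π.addRow c j < π.exitRow (j + 1)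
      · omega
      · exact π.runStart_le_of_apply_eq
          (π.apply_eq_apply_exitRow_succ hj (by omega) ih).symm
    · rw [π.exitRow_of_lt (by omega : π.lastCol < j)] at ih
      omega

lemma addRow_eq_zero (hc : π.CanAdd c) : π.addRow c (c.2 + 1) = 0 := by
  by_cases hπ : π 0 0 = 0
  · exact π.runStart_eq_zero (π.apply_eq_zero_of_le hπ le_rfl (Nat.zero_le _)) _
  rcases cellKey_le_iff.mp (hc hπ) with h | ⟨h₁, h₂⟩
  · exact π.runStart_eq_zero (π.apply_zero_eq_zero_of_lastCol_lt hπ h) _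
  · have := addRow_le_exitRow h₂ (c.2 + 1)
    rw [π.exitRow_of_lt (by simp only [hookCell] at h₁; omega)] at this
    omega

lemma addZigzag_apply_zero_ne_zero (hj : j ≤ c.2) : π.addZigzag c 0 j ≠ 0 := by
  rw [addZigzag_apply]
  by_cases h : π 0 j = 0
  · rw [if_pos ⟨hj, (π.runStart_eq_zero h _).le, Nat.zero_le _⟩]
    omega
  · omega

lemma addZigzag_apply_zero_succ (hc : π.CanAdd c) : π.addZigzag c 0 (c.2 + 1) = 0 := by
  rw [addZigzag_apply, if_neg fun h => by have := h.1; omega, add_zero]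
  by_cases hπ : π 0 0 = 0
  · exact π.apply_eq_zero_of_le hπ le_rfl (Nat.zero_le _)
  · refine π.apply_zero_eq_zero_of_lastCol_lt hπ ?_
    rcases cellKey_le_iff.mp (hc hπ) with h | ⟨h, -⟩ <;> simp only [hookCell] at h <;> omega

lemma lastCol_addZigzag (hc : π.CanAdd c) : (π.addZigzag c).lastCol = c.2 :=
  lastCol_eq _ (addZigzag_apply_zero_ne_zero le_rfl) (addZigzag_apply_zero_succ hc)

lemma addZigzag_apply_of_staircase (h : Staircase c.2 (π.addRow c) i j) :
    π.addZigzag c i j = π (π.addRow c j) j + 1 := by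
  rw [addZigzag_apply, if_pos h, π.apply_eq_of_runStart_le h.2.1 h.2.2]

lemma runEnd_addZigzag (hj : j ≤ c.2) :
    (π.addZigzag c).runEnd j (π.addRow c (j + 1)) = π.addRow c j := by
  have hle := π.addRow_succ_le c j
  have htop := addZigzag_apply_of_staircase (π := π) ⟨hj, le_rfl, hle⟩
  refine le_antisymm ((π.addZigzag c).runEnd_le_of_apply_ne hle ?_)
    ((π.addZigzag c).le_runEnd_of_apply_eq (by omega)
      (by rw [addZigzag_apply_of_staircase ⟨hj, hle, le_rfl⟩, htop]))
  rw [addZigzag_apply, if_neg fun h => by have := h.2.2; omega, htop]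
  have := π.succ_left_le' (π.addRow c j) j
  omega

lemma exitRow_addZigzag (hc : π.CanAdd c) (j : ℕ) (hj : j ≤ c.2 + 1) :
    (π.addZigzag c).exitRow j = π.addRow c j := by
  rcases hj.lt_or_eq with hj | rfl
  · rw [exitRow_of_le _ (by rw [lastCol_addZigzag hc]; omega),
      exitRow_addZigzag hc (j + 1) hj, runEnd_addZigzag (by omega)]
  · rw [exitRow_of_lt _ (by rw [lastCol_addZigzag hc]; omega), addRow_eq_zero hc]
termination_by c.2 + 1 - j

lemma hookCell_addZigzag (hc : π.CanAdd c) : (π.addZigzag c).hookCell = c :=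
  Prod.ext (exitRow_addZigzag hc 0 (Nat.zero_le _)) (lastCol_addZigzag hc)

lemma removeZigzag_addZigzag (hc : π.CanAdd c) :
    (π.addZigzag c).removeZigzag (addZigzag_apply_zero_ne_zero (Nat.zero_le _)) = π := by
  have hpath : ∀ i j, Staircase (π.addZigzag c).lastCol (π.addZigzag c).exitRow i j ↔
      Staircase c.2 (π.addRow c) i j := fun i j => by
    rw [lastCol_addZigzag hc]
    exact staircase_congr (fun j hj => exitRow_addZigzag hc j hj) i j
  ext i j
  rw [removeZigzag_apply, addZigzag_apply]
  by_cases h : Staircase c.2 (π.addRow c) i j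
  · rw [if_pos ((hpath i j).mpr h), if_pos h]
    omega
  · rw [if_neg (mt (hpath i j).mp h), if_neg h]
    omega

section removeZigzag

variable (hπ : π 0 0 ≠ 0)
include hπ

lemma removeZigzag_apply_of_staircase (h : Staircase π.lastCol π.exitRow i j) :
    π.removeZigzag hπ i j = π (π.exitRow (j + 1)) j - 1 := by
  rw [removeZigzag_apply, if_pos h, π.apply_eq_apply_exitRow_succ h.1 h.2.1 h.2.2]

lemma runStart_removeZigzag (hj : j ≤ π.lastCol) :
    (π.removeZigzag hπ).runStart j (π.exitRow j) = π.exitRow (j + 1) := by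
  have hle := π.exitRow_succ_le j
  have hexit := removeZigzag_apply_of_staircase hπ ⟨hj, hle, le_rfl⟩
  refine le_antisymm ((π.removeZigzag hπ).runStart_le_of_apply_eq ?_)
    ((π.removeZigzag hπ).le_runStart fun i hi => ?_)
  · rw [removeZigzag_apply_of_staircase hπ ⟨hj, le_rfl, hle⟩, hexit]
  · rw [hexit, removeZigzag_apply, if_neg fun h => by have := h.2.1; omega, Nat.sub_zero]
    have := π.apply_exitRow_succ_ne_zero hπ j hj
    have := π.apply_le_apply (j := j) hi.le le_rfl
    omega

lemma addRow_removeZigzag :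
    ∀ j ≤ π.lastCol + 1, (π.removeZigzag hπ).addRow π.hookCell j = π.exitRow j
  | 0, _ => rfl
  | j + 1, hj => by
    rw [addRow_succ, addRow_removeZigzag j (by omega), runStart_removeZigzag hπ (by omega)]

lemma addZigzag_removeZigzag : (π.removeZigzag hπ).addZigzag π.hookCell = π := by
  ext i j
  have hpath := staircase_congr (b := π.hookCell.2) (addRow_removeZigzag hπ) i j
  rw [addZigzag_apply, removeZigzag_apply]
  by_cases h : Staircase π.lastCol π.exitRow i j
  · have := π.apply_ne_zero_of_staircase hπ h
    rw [if_pos h, if_pos (hpath.mpr h)]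
    omega
  · rw [if_neg h, if_neg (mt hpath.mp h)]
    omega

variable (hρ : π.removeZigzag hπ 0 0 ≠ 0)
include hρ

lemma lastCol_removeZigzag_le : (π.removeZigzag hπ).lastCol ≤ π.lastCol := by
  by_contra h
  have := ((π.removeZigzag hπ).apply_zero_ne_zero_iff hρ (j := π.lastCol + 1)).mpr (by omega)
  rw [removeZigzag_apply, π.apply_zero_eq_zero_of_lastCol_lt hπ (lt_add_one _)] at this
  exact this (Nat.zero_sub _)

lemma exitRow_le_exitRow_removeZigzag (hcol : (π.removeZigzag hπ).lastCol = π.lastCol) (j : ℕ) :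
    π.exitRow j ≤ (π.removeZigzag hπ).exitRow j := by
  by_cases hj : j ≤ π.lastCol
  · have ih := exitRow_le_exitRow_removeZigzag hcol (j + 1)
    rw [(π.removeZigzag hπ).exitRow_of_le (hcol ▸ hj)]
    by_cases hr : π.exitRow j ≤ (π.removeZigzag hπ).exitRow (j + 1)
    · exact hr.trans ((π.removeZigzag hπ).le_runEnd _ _)
    · -- both rows lie on the path removed from column `j`, where the entries were constant
      refine (π.removeZigzag hπ).le_runEnd_of_apply_eq
        ((π.removeZigzag hπ).apply_exitRow_succ_ne_zero hρ j (hcol ▸ hj)) ?_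
      rw [removeZigzag_apply_of_staircase hπ ⟨hj, π.exitRow_succ_le j, le_rfl⟩,
        removeZigzag_apply_of_staircase hπ ⟨hj, ih, by omega⟩]
  · rw [π.exitRow_of_lt (by omega)]
    exact Nat.zero_le _
termination_by π.lastCol + 1 - j

end removeZigzag

lemma canAdd_removeZigzag (hπ : π 0 0 ≠ 0) : (π.removeZigzag hπ).CanAdd π.hookCell :=
  fun hρ => cellKey_le_iff.mpr <| (lastCol_removeZigzag_le hπ hρ).lt_or_eq.imp id
    fun h => ⟨h, exitRow_le_exitRow_removeZigzag hπ hρ h 0⟩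

lemma size_addZigzag (hc : π.CanAdd c) : (π.addZigzag c).size = π.size + hookLength c := by
  set N := max (max (π.addZigzag c).bound π.bound) (max (c.1 + 1) (c.2 + 1)) with hN
  rw [(π.addZigzag c).size_eq_sum (N := N) (by omega), π.size_eq_sum (N := N) (by omega)]
  simp only [addZigzag_apply]
  rw [sum_add_distrib, sum_staircase_boole (π.addRow_succ_le c) (addRow_eq_zero hc)
    (by omega) (by show c.1 < N; omega)]
  rfl

lemma size_removeZigzag (hπ : π 0 0 ≠ 0) :
    π.size = (π.removeZigzag hπ).size + hookLength π.hookCell := by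
  conv_lhs => rw [← addZigzag_removeZigzag hπ]
  exact size_addZigzag (canAdd_removeZigzag hπ)

lemma size_removeZigzag_lt (hπ : π 0 0 ≠ 0) : (π.removeZigzag hπ).size < π.size := by
  rw [size_removeZigzag hπ]
  exact Nat.lt_add_of_pos_right (hookLength_pos _)

/-! ### The bijection with fillings -/

def toFilling (π : PlanePartition) : ℕ × ℕ →₀ ℕ :=
  if hπ : π 0 0 = 0 then 0 else (π.removeZigzag hπ).toFilling + Finsupp.single π.hookCell 1
termination_by π.size
decreasing_by exact size_removeZigzag_lt hπ

lemma toFilling_eq_zero (hπ : π 0 0 = 0) : π.toFilling = 0 := by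
  rw [toFilling, dif_pos hπ]

lemma toFilling_eq_add (hπ : π 0 0 ≠ 0) :
    π.toFilling = (π.removeZigzag hπ).toFilling + Finsupp.single π.hookCell 1 := by
  rw [toFilling, dif_neg hπ]

lemma hookCell_mem_support (hπ : π 0 0 ≠ 0) : π.hookCell ∈ π.toFilling.support := by
  rw [toFilling_eq_add hπ, Finsupp.mem_support_iff, Finsupp.add_apply, Finsupp.single_eq_same]
  exact Nat.succ_ne_zero _

lemma toFilling_eq_zero_iff : π.toFilling = 0 ↔ π 0 0 = 0 :=
  ⟨fun h => by
    by_contra hπ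
    simpa [h] using hookCell_mem_support hπ, toFilling_eq_zero⟩

lemma weight_toFilling {π : PlanePartition} : weight π.toFilling = π.size := by
  by_cases hπ : π 0 0 = 0
  · rw [toFilling_eq_zero hπ, π.eq_zero_of_apply_zero_zero hπ, size_zero]
    rfl
  · rw [toFilling_eq_add hπ, weight_add, weight_single, mul_one, weight_toFilling,
      ← size_removeZigzag hπ]
termination_by π.size
decreasing_by exact size_removeZigzag_lt hπ

lemma cellKey_hookCell_le {π : PlanePartition} (hπ : π 0 0 ≠ 0) :
    ∀ x ∈ π.toFilling.support, cellKey π.hookCell ≤ cellKey x := by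
  intro x hx
  rw [toFilling_eq_add hπ] at hx
  rcases mem_union.mp (Finsupp.support_add hx) with hx | hx
  · have hρ : π.removeZigzag hπ 0 0 ≠ 0 := fun h => by
      simp [toFilling_eq_zero h] at hx
    exact (canAdd_removeZigzag hπ hρ).trans (cellKey_hookCell_le hρ x hx)
  · rw [Finsupp.support_single _ one_ne_zero, mem_singleton] at hx
    rw [hx]
termination_by π.size
decreasing_by exact size_removeZigzag_lt hπ

lemma toFilling_addZigzag (hc : π.CanAdd c) :
    (π.addZigzag c).toFilling = π.toFilling + Finsupp.single c 1 := by
  rw [toFilling_eq_add (addZigzag_apply_zero_ne_zero (Nat.zero_le _)), removeZigzag_addZigzag hc,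
    hookCell_addZigzag hc]

lemma eq_of_toFilling_eq {π τ : PlanePartition} (h : π.toFilling = τ.toFilling) : π = τ := by
  have hzero : π 0 0 = 0 ↔ τ 0 0 = 0 := by rw [← toFilling_eq_zero_iff, h, toFilling_eq_zero_iff]
  by_cases hπ : π 0 0 = 0
  · rw [π.eq_zero_of_apply_zero_zero hπ, τ.eq_zero_of_apply_zero_zero (hzero.mp hπ)]
  have hτ : τ 0 0 ≠ 0 := mt hzero.mpr hπ
  -- both end cells are the `cellKey`-least cell of the common filling
  have hcell : π.hookCell = τ.hookCell := cellKey_injective <| le_antisymm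
    (cellKey_hookCell_le hπ _ (h ▸ hookCell_mem_support hτ))
    (cellKey_hookCell_le hτ _ (h ▸ hookCell_mem_support hπ))
  rw [toFilling_eq_add hπ, toFilling_eq_add hτ, hcell] at h
  rw [← addZigzag_removeZigzag hπ, ← addZigzag_removeZigzag hτ, hcell,
    eq_of_toFilling_eq (add_right_cancel h)]
termination_by π.size
decreasing_by exact size_removeZigzag_lt hπ

lemma exists_toFilling_eq (a : ℕ × ℕ →₀ ℕ) : ∃ π : PlanePartition, π.toFilling = a := by
  induction hn : weight a using Nat.strong_induction_on generalizing a with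
  | _ n ih =>
  rcases eq_or_ne a 0 with rfl | ha
  · exact ⟨0, toFilling_eq_zero rfl⟩
  -- add the zigzag path of the `cellKey`-least cell last
  obtain ⟨c, hc, hmin⟩ := a.support.exists_min_image cellKey (Finsupp.support_nonempty_iff.mpr ha)
  have hsum : a - Finsupp.single c 1 + Finsupp.single c 1 = a :=
    tsub_add_cancel_of_le (Finsupp.single_le_iff.mpr (Nat.one_le_iff_ne_zero.mpr
      (Finsupp.mem_support_iff.mp hc)))
  have hlt : weight (a - Finsupp.single c 1) < n := by
    have := congrArg weight hsum
    rw [weight_add, weight_single, mul_one, hn] at this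
    have := hookLength_pos c
    omega
  obtain ⟨π, hπ⟩ := ih _ hlt _ rfl
  refine ⟨π.addZigzag c, ?_⟩
  rw [toFilling_addZigzag fun h => hmin _ (Finsupp.support_tsub (hπ ▸ hookCell_mem_support h)),
    hπ, hsum]

lemma card_size_eq_card_weight (n : ℕ) :
    Nat.card {π : PlanePartition // π.size = n} = Nat.card {a : ℕ × ℕ →₀ ℕ // weight a = n} :=
  Nat.card_congr <| Equiv.ofBijective (fun π => ⟨π.1.toFilling, weight_toFilling.trans π.2⟩)
    ⟨fun _ _ h => Subtype.ext (eq_of_toFilling_eq (congrArg Subtype.val h)), fun a => by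
      obtain ⟨π, hπ⟩ := exists_toFilling_eq a.1
      exact ⟨⟨π, weight_toFilling.symm.trans (hπ ▸ a.2)⟩, Subtype.ext hπ⟩⟩

/-! ### Plane partitions as lower sets -/

variable (π) in
def cubes : Finset (ℕ × ℕ × ℕ) :=
  {t ∈ range π.bound ×ˢ range π.bound ×ˢ range (π 0 0) | t.2.2 < π t.1 t.2.1}

lemma mem_cubes {t : ℕ × ℕ × ℕ} : t ∈ π.cubes ↔ t.2.2 < π t.1 t.2.1 := by
  refine ⟨fun h => (mem_filter.mp h).2, fun h => mem_filter.mpr ⟨?_, h⟩⟩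
  have := π.lt_bound_of_apply_ne_zero (by omega : π t.1 t.2.1 ≠ 0)
  have := π.apply_le_apply (Nat.zero_le t.1) (Nat.zero_le t.2.1)
  simp only [mem_product, mem_range]
  omega

lemma isLowerSet_cubes : IsLowerSet (π.cubes : Set (ℕ × ℕ × ℕ)) := by
  rintro ⟨i, j, k⟩ ⟨i', j', k'⟩ ⟨hi, hj, hk⟩ h
  simp only [mem_coe, mem_cubes] at h ⊢
  exact (lt_of_le_of_lt hk h).trans_le (π.apply_le_apply hi hj)

lemma card_cubes : π.cubes.card = π.size := by
  have hcol : ∀ i j, ∑ k ∈ range (π 0 0), (if k < π i j then 1 else 0) = π i j := fun i j => by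
    have hle := π.apply_le_apply (Nat.zero_le i) (Nat.zero_le j)
    have : {k ∈ range (π 0 0) | k < π i j} = range (π i j) := by
      ext k
      simp only [mem_filter, mem_range]
      omega
    rw [sum_boole, Nat.cast_id, this, card_range]
  rw [cubes, card_filter, size]
  simp only [sum_product, hcol]

end PlanePartition

variable {S : Finset (ℕ × ℕ × ℕ)}

def stackHeight (S : Finset (ℕ × ℕ × ℕ)) (i j : ℕ) : ℕ :=
  Nat.find (p := fun k => (i, j, k) ∉ S) <| by
    obtain ⟨k, hk⟩ := Infinite.exists_notMem_finset (S.image fun t => t.2.2)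
    exact ⟨k, fun h => hk (mem_image_of_mem _ h)⟩

lemma lt_stackHeight_iff (hS : IsLowerSet (S : Set (ℕ × ℕ × ℕ))) {i j k : ℕ} :
    k < stackHeight S i j ↔ (i, j, k) ∈ S := by
  refine ⟨fun h => not_not.mp (Nat.find_min _ h), fun h => ?_⟩
  by_contra hk
  exact Nat.find_spec (p := fun k => (i, j, k) ∉ S) _
    (hS (show (i, j, stackHeight S i j) ≤ (i, j, k) from ⟨le_rfl, le_rfl, not_lt.mp hk⟩) h)

namespace PlanePartition

def ofLowerSet (hS : IsLowerSet (S : Set (ℕ × ℕ × ℕ))) : PlanePartition where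
  toFun := stackHeight S
  succ_left_le' i j := le_of_forall_lt fun k hk => (lt_stackHeight_iff hS).mpr <|
    hS (show (i, j, k) ≤ (i + 1, j, k) from ⟨Nat.le_succ i, le_rfl, le_rfl⟩)
      ((lt_stackHeight_iff hS).mp hk)
  succ_right_le' i j := le_of_forall_lt fun k hk => (lt_stackHeight_iff hS).mpr <|
    hS (show (i, j, k) ≤ (i, j + 1, k) from ⟨le_rfl, Nat.le_succ j, le_rfl⟩)
      ((lt_stackHeight_iff hS).mp hk)
  exists_eq_zero' := by
    obtain ⟨N, hN⟩ := Infinite.exists_notMem_finset (S.image fun t => t.1 + t.2.1)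
    refine ⟨N, ?_, ?_⟩ <;> refine Nat.eq_zero_of_not_pos fun h => hN ?_ <;>
      exact mem_image.mpr ⟨_, (lt_stackHeight_iff hS).mp h, by simp⟩

lemma cubes_ofLowerSet (hS : IsLowerSet (S : Set (ℕ × ℕ × ℕ))) : (ofLowerSet hS).cubes = S := by
  ext ⟨i, j, k⟩
  exact mem_cubes.trans (lt_stackHeight_iff hS)

lemma ofLowerSet_cubes (π : PlanePartition) : ofLowerSet π.isLowerSet_cubes = π := by
  ext i j
  exact eq_of_forall_lt_iff fun k =>
    (lt_stackHeight_iff π.isLowerSet_cubes (i := i) (j := j)).trans mem_cubes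

def sizeEquivLowerSet (n : ℕ) :
    {π : PlanePartition // π.size = n} ≃
      {S : Finset (ℕ × ℕ × ℕ) // IsLowerSet (S : Set (ℕ × ℕ × ℕ)) ∧ S.card = n} where
  toFun π := ⟨π.1.cubes, π.1.isLowerSet_cubes, π.1.card_cubes.trans π.2⟩
  invFun S := ⟨ofLowerSet S.2.1, by rw [← card_cubes, cubes_ofLowerSet]; exact S.2.2⟩
  left_inv π := Subtype.ext (ofLowerSet_cubes π.1)
  right_inv S := Subtype.ext (cubes_ofLowerSet S.2.1)

end PlanePartition

lemma pp_eq_card_weight (n : ℕ) : pp n = Nat.card {a : ℕ × ℕ →₀ ℕ // weight a = n} := by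
  rw [pp, ← Nat.card_congr (PlanePartition.sizeEquivLowerSet n),
    PlanePartition.card_size_eq_card_weight]

end MacMahon

open MacMahon

/-- **MacMahon's formula.**
`∑_{n=0}^∞ pp(n) qⁿ = ∏_{m=1}^∞ (1 - q^m)^{-m}` in `ℤ⟦q⟧`. -/
theorem macmahon_formula (M : PowerSeries ℤ) (hM : IsMacMahon M) :
    (PowerSeries.mk fun n => (pp n : ℤ)) = M := by
  ext n
  obtain ⟨s, hs⟩ := hM n
  rw [coeff_mk, ← hs (s ∪ range n) subset_union_left,
    prod_congr rfl fun m _ => ring_inverse_one_sub_X_pow_pow (Nat.succ_ne_zero m) (m + 1),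
    coeff_prod_invOneSubXPow_pow subset_union_right, pp_eq_card_weight]

end
end
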